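/- arXiv:2103.16405 — 3 statements merged into one kernel-verified Lean document; each statement's English description precedes it below -/
import Mathlib

section
/- Every single-selection coverage game with a set K of compromised agents admits at least one pure Nash equilibrium, where compromised agents play any maximum-value resource in their action set and remaining agents play a Nash equilibrium of the induced potential game with marginal-contribution utilities. -/
open Finset

variable {N R : Type} [Fintype N] [DecidableEq N] [Fintype R] [DecidableEq R]

/-- Welfare of the set of resources selected by agents in `J` under profile `a`. -/
def coveredValue (v : R → ℝ) (a : N → R) (J : Finset N) : ℝ :=
  ∑ r ∈ J.image a, v r

/-- Marginal-contribution utility: `U_i(a) = W(a) - W(∅, a_{-i})`. -/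
def utility (v : R → ℝ) (a : N → R) (i : N) : ℝ :=
  coveredValue v a Finset.univ - coveredValue v a (Finset.univ.erase i)

/-- A joint action profile: each agent selects an admissible resource. -/
def isProfile (A : N → Finset R) (a : N → R) : Prop :=
  ∀ i, a i ∈ A i

/-- Pure Nash equilibrium with compromised agent set `K`: normal agents have no
profitable unilateral deviation w.r.t. marginal-contribution utilities, and each
compromised agent selects a maximum-value resource of its action set. -/
def isNE (A : N → Finset R) (K : Finset N) (v : R → ℝ) (a : N → R) : Prop :=
  isProfile A a ∧
  (∀ i, i ∉ K → ∀ b ∈ A i, utility v (Function.update a i b) i ≤ utility v a i) ∧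
  (∀ j ∈ K, ∀ r ∈ A j, v r ≤ v (a j))

/-- Optimal welfare of the game. -/
noncomputable def optWelfare (A : N → Finset R) (v : R → ℝ) : ℝ :=
  sSup {w | ∃ a, isProfile A a ∧ w = coveredValue v a Finset.univ}

/-- Worst-case Nash equilibrium welfare. -/
noncomputable def worstNEWelfare (A : N → Finset R) (K : Finset N) (v : R → ℝ) : ℝ :=
  sInf {w | ∃ a, isNE A K v a ∧ w = coveredValue v a Finset.univ}

/-- Price of anarchy. -/
noncomputable def PoA (A : N → Finset R) (K : Finset N) (v : R → ℝ) : ℝ :=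
  worstNEWelfare A K v / optWelfare A v

/-- `PoS(G) = 1`: some Nash equilibrium is welfare-optimal. -/
def PoSoneHolds (A : N → Finset R) (K : Finset N) (v : R → ℝ) : Prop :=
  ∃ a, isNE A K v a ∧
    ∀ b, isProfile A b → coveredValue v b Finset.univ ≤ coveredValue v a Finset.univ

/-- Distance of the game: minimal ℓ1-norm of a nonnegative perturbation of the
resource values yielding a game with an optimal Nash equilibrium. -/
noncomputable def gameDist (A : N → Finset R) (K : Finset N) (v : R → ℝ) : ℝ :=
  sInf {c | ∃ p : R → ℝ, (∀ r, 0 ≤ p r) ∧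
    PoSoneHolds A K (fun r => v r + p r) ∧ c = ∑ r, p r}

/-! Marginal-contribution utilities make the welfare `W(a) = coveredValue v a univ` an exact
potential: `W(∅, a_{-i})` does not depend on `a_i`, so a unilateral deviation of agent `i`
changes `U_i` by exactly the change in `W`. Fix the compromised agents on maximum-value
resources; a welfare maximiser among the (finitely many, and by nonemptiness of the action
sets, at least one) profiles extending that choice is then a Nash equilibrium. -/

omit [Fintype N] [Fintype R] in
lemma coveredValue_update_of_notMem (v : R → ℝ) (a : N → R) {J : Finset N} {i : N}
    (hi : i ∉ J) (b : R) :
    coveredValue v (Function.update a i b) J = coveredValue v a J := by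
  unfold coveredValue
  refine congrArg (∑ r ∈ ·, v r) (image_congr fun j hj => ?_)
  exact Function.update_of_ne (ne_of_mem_of_not_mem hj hi) b a

omit [Fintype R] in
lemma utility_update_le_iff (v : R → ℝ) (a : N → R) (i : N) (b : R) :
    utility v (Function.update a i b) i ≤ utility v a i ↔
      coveredValue v (Function.update a i b) univ ≤ coveredValue v a univ := by
  unfold utility
  rw [coveredValue_update_of_notMem v a (notMem_erase i univ), sub_le_sub_iff_right]

omit [Fintype R] in
lemma isNE_of_forall_update_le {A : N → Finset R} {K : Finset N} {v : R → ℝ} {a : N → R}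
    (ha : isProfile A a) (hK : ∀ j ∈ K, ∀ r ∈ A j, v r ≤ v (a j))
    (hW : ∀ i, i ∉ K → ∀ b ∈ A i,
      coveredValue v (Function.update a i b) univ ≤ coveredValue v a univ) :
    isNE A K v a :=
  ⟨ha, fun i hi b hb => (utility_update_le_iff v a i b).2 (hW i hi b hb), hK⟩

omit [Fintype R] in
lemma exists_isNE_eqOn (A : N → Finset R) (K : Finset N) (v : R → ℝ)
    (hA : ∀ i, (A i).Nonempty) (c : N → R)
    (hc : ∀ j ∈ K, c j ∈ A j ∧ ∀ r ∈ A j, v r ≤ v (c j)) :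
    ∃ a, isNE A K v a ∧ ∀ j ∈ K, a j = c j := by
  set S : N → Finset R := fun i => if i ∈ K then {c i} else A i
  have hS : (Fintype.piFinset S).Nonempty := Fintype.piFinset_nonempty.2 fun i => by
    by_cases hi : i ∈ K <;> simp [S, hi, hA i]
  obtain ⟨a, haS, hmax⟩ := (Fintype.piFinset S).exists_max_image (coveredValue v · univ) hS
  rw [Fintype.mem_piFinset] at haS
  have hac : ∀ j ∈ K, a j = c j := fun j hj => by simpa [S, hj] using haS j
  refine ⟨a, isNE_of_forall_update_le (fun i => ?_) (fun j hj => hac j hj ▸ (hc j hj).2) ?_, hac⟩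
  · by_cases hi : i ∈ K
    · exact hac i hi ▸ (hc i hi).1
    · simpa [S, hi] using haS i
  · refine fun i hi b hb => hmax _ (Fintype.mem_piFinset.2 fun j => ?_)
    rcases eq_or_ne j i with rfl | hji
    · simpa [S, hi] using hb
    · simpa [Function.update_of_ne hji] using haS j

/-- Every single-selection coverage game with compromised agents admits a pure
Nash equilibrium; moreover, for any assignment of the compromised agents to
maximum-value resources in their action sets, there is a Nash equilibrium in
which they play exactly those resources. -/
theorem exists_pure_nash (A : N → Finset R) (K : Finset N) (v : R → ℝ)
    (hA : ∀ i, (A i).Nonempty) :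
    (∃ a, isNE A K v a) ∧
    ∀ c : N → R, (∀ j ∈ K, c j ∈ A j ∧ ∀ r ∈ A j, v r ≤ v (c j)) →
      ∃ a, isNE A K v a ∧ ∀ j ∈ K, a j = c j := by
  refine ⟨?_, exists_isNE_eqOn A K v hA⟩
  choose c hcA hcmax using fun j => (A j).exists_max_image v (hA j)
  obtain ⟨a, ha, -⟩ := exists_isNE_eqOn A K v hA c fun j _ => ⟨hcA j, hcmax j⟩
  exact ⟨a, ha⟩
end

section
/- (Fragility of the price of anarchy) For any single-selection coverage game G with compromised agent set K and distance D(G) (the minimal ℓ1-norm of a nonnegative perturbation p to resource values such that the perturbed game has an optimal Nash equilibrium), the price of anarchy satisfies PoA(G) ≥ min{1/2, 1/(|K| + 1 − D(G))}. -/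
open Finset

variable {N R : Type} [Fintype N] [DecidableEq N] [Fintype R] [DecidableEq R]

/-! Let `b` be an optimal profile and `a` an equilibrium. Normal agents could move onto the resources
of `b` that `a` leaves uncovered, which gives the smoothness bound
`W(b) ≤ 2 W(a) - W_a(K) + ∑_{j ∈ K} v(b_j)`. If `W(b) > 2 W(a)`, then `K` is nonempty; let `M ≤ 1`
be the largest value that `K` picks in `a`. Raising the resources `b(K)` to value `M` makes `b` an
optimal equilibrium, so `D(G) ≤ |K| M - ∑_{j ∈ K} v(b_j)`. Together with `M ≤ W_a(K)` and
`W(a) ≥ 1` (a value-`1` resource is always covered in equilibrium) this yields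
`W(b) ≤ (|K| + 1 - D(G)) W(a)`. -/

open Function

theorem Finset.sum_image_le_add_sum_filter_notMem {ι α M : Type*} [DecidableEq α]
    [AddCommMonoid M] [PartialOrder M] [IsOrderedAddMonoid M]
    (s : Finset ι) (T : Finset α) (b : ι → α) {v : α → M} (hv : ∀ x, 0 ≤ v x) :
    ∑ x ∈ s.image b, v x ≤ ∑ x ∈ T, v x + ∑ i ∈ s with b i ∉ T, v (b i) := by
  calc ∑ x ∈ s.image b, v x
      ≤ ∑ x ∈ T ∪ s.image b \ T, v x := by
        rw [union_sdiff_self_eq_union]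
        exact sum_le_sum_of_subset_of_nonneg subset_union_right fun x _ _ => hv x
    _ = ∑ x ∈ T, v x + ∑ x ∈ (s.filter (b · ∉ T)).image b, v x := by
        rw [sum_union disjoint_sdiff, sdiff_eq_filter, filter_image]
    _ ≤ ∑ x ∈ T, v x + ∑ i ∈ s with b i ∉ T, v (b i) := by
        gcongr
        exact sum_image_le_of_nonneg fun x _ => hv x

theorem le_mul_of_two_mul_lt {opt w m k d : ℝ} (hw : 1 ≤ w) (hm : m ≤ 1) (hk : 1 ≤ k)
    (hopt : 2 * w < opt) (h : opt ≤ 2 * w + (k - 1) * m - d) : opt ≤ (k + 1 - d) * w := by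
  nlinarith [mul_nonneg (mul_nonneg (sub_nonneg.2 hk) (sub_nonneg.2 hm)) (by linarith : 0 ≤ w),
    mul_nonneg (sub_nonneg.2 h) (by linarith : 0 ≤ w),
    mul_nonneg (sub_nonneg.2 hopt.le) (sub_nonneg.2 hw)]

theorem min_one_div_mul_le {opt w e : ℝ} (hopt : 0 ≤ opt) (hw : 0 ≤ w)
    (h : opt ≤ 2 * w ∨ opt ≤ e * w) : min (1 / 2) (1 / e) * opt ≤ w := by
  rcases h with h | h
  · calc min (1 / 2) (1 / e) * opt ≤ 1 / 2 * opt :=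
          mul_le_mul_of_nonneg_right (min_le_left _ _) hopt
      _ ≤ w := by linarith
  have hle : min (1 / 2) (1 / e) * opt ≤ 1 / e * opt :=
    mul_le_mul_of_nonneg_right (min_le_right _ _) hopt
  rcases le_or_gt e 0 with he | he
  · exact hle.trans ((mul_nonpos_of_nonpos_of_nonneg (one_div_nonpos.2 he) hopt).trans hw)
  · refine hle.trans ?_
    rw [one_div_mul_eq_div, div_le_iff₀ he, mul_comm]
    exact h

section CoverageGame

variable {N R : Type} {A : N → Finset R} {K : Finset N} {v : R → ℝ} {a b : N → R}

theorem isProfile.update [DecidableEq N] (ha : isProfile A a) {i : N} {r : R} (hr : r ∈ A i) :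
    isProfile A (update a i r) := by
  intro j
  rcases eq_or_ne j i with rfl | hj
  · rwa [update_self]
  · rw [update_of_ne hj]
    exact ha j

variable [DecidableEq R]

theorem coveredValue_add (v p : R → ℝ) (a : N → R) (J : Finset N) :
    coveredValue (fun r => v r + p r) a J = coveredValue v a J + coveredValue p a J :=
  sum_add_distrib

theorem le_coveredValue_of_mem (hv : ∀ r, 0 ≤ v r) {J : Finset N} {r : R} (hr : r ∈ J.image a) :
    v r ≤ coveredValue v a J :=
  single_le_sum (fun r _ => hv r) hr

theorem coveredValue_le_of_support_subset [Fintype N] {p : R → ℝ} (hp : ∀ r, 0 ≤ p r)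
    (hpb : ∀ r ∉ univ.image b, p r = 0) (c : N → R) :
    coveredValue p c univ ≤ coveredValue p b univ :=
  calc coveredValue p c univ ≤ ∑ r ∈ univ.image c ∪ univ.image b, p r :=
        sum_le_sum_of_subset_of_nonneg subset_union_left fun r _ _ => hp r
    _ = coveredValue p b univ := (sum_subset subset_union_right fun r _ hr => hpb r hr).symm

theorem optWelfare_eq [Fintype N] (hb : isProfile A b)
    (hbopt : ∀ c, isProfile A c → coveredValue v c univ ≤ coveredValue v b univ) :
    optWelfare A v = coveredValue v b univ :=
  IsGreatest.csSup_eq ⟨⟨b, hb, rfl⟩, by rintro _ ⟨c, hc, rfl⟩; exact hbopt c hc⟩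

variable [DecidableEq N]

theorem coveredValue_insert (v : R → ℝ) (a : N → R) (i : N) (J : Finset N) :
    coveredValue v a (insert i J) =
      (if a i ∈ J.image a then 0 else v (a i)) + coveredValue v a J := by
  unfold coveredValue
  rw [image_insert]
  split_ifs with h
  · rw [insert_eq_of_mem h, zero_add]
  · rw [sum_insert h]

theorem coveredValue_insert_sub_antitone (hv : ∀ r, 0 ≤ v r) (a : N → R) (i : N)
    {J J' : Finset N} (hJ : J ⊆ J') :
    coveredValue v a (insert i J') - coveredValue v a J' ≤
      coveredValue v a (insert i J) - coveredValue v a J := by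
  simp only [coveredValue_insert, add_sub_cancel_right]
  by_cases h' : a i ∈ J'.image a
  · rw [if_pos h']
    split_ifs
    exacts [le_rfl, hv _]
  · rw [if_neg h', if_neg fun h => h' (image_subset_image hJ h)]

variable [Fintype N]

theorem image_erase_update (a : N → R) (i : N) (r : R) :
    (univ.erase i).image (update a i r) = (univ.erase i).image a :=
  image_congr fun _ hj => update_of_ne (ne_of_mem_erase hj) _ _

theorem utility_eq (v : R → ℝ) (a : N → R) (i : N) :
    utility v a i = if a i ∈ (univ.erase i).image a then 0 else v (a i) := by
  have h := coveredValue_insert v a i (univ.erase i)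
  rw [insert_erase (mem_univ i)] at h
  rw [utility, h, add_sub_cancel_right]

theorem utility_nonneg (hv : ∀ r, 0 ≤ v r) (a : N → R) (i : N) : 0 ≤ utility v a i := by
  rw [utility_eq]
  split_ifs
  exacts [le_rfl, hv _]

theorem utility_le_coveredValue (hv : ∀ r, 0 ≤ v r) (a : N → R) (i : N) :
    utility v a i ≤ coveredValue v a univ :=
  sub_le_self _ (sum_nonneg fun r _ => hv r)

theorem utility_update_of_notMem (v : R → ℝ) (i : N) {r : R} (hr : r ∉ univ.image a) :
    utility v (update a i r) i = v r := by
  rw [utility_eq, update_self, image_erase_update,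
    if_neg fun h => hr (image_subset_image (erase_subset i univ) h)]

theorem utility_update_sub_utility (v : R → ℝ) (a : N → R) (i : N) (r : R) :
    utility v (update a i r) i - utility v a i =
      coveredValue v (update a i r) univ - coveredValue v a univ := by
  simp only [utility, coveredValue, image_erase_update]
  ring

theorem sum_utility_le (hv : ∀ r, 0 ≤ v r) (a : N → R) (S : Finset N) :
    ∑ i ∈ S, utility v a i ≤ coveredValue v a univ - coveredValue v a Sᶜ := by
  induction S using Finset.induction_on with
  | empty => simp
  | insert i S hi ih =>
    have key := coveredValue_insert_sub_antitone hv a i (erase_subset_erase i (subset_univ Sᶜ))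
    rw [insert_erase (mem_compl.2 hi), insert_erase (mem_univ i)] at key
    rw [sum_insert hi, compl_insert, utility]
    linarith

theorem isNE_of_coveredValue_update_le (ha : isProfile A a)
    (hK : ∀ j ∈ K, ∀ r ∈ A j, v r ≤ v (a j))
    (hdev : ∀ i ∉ K, ∀ r ∈ A i, coveredValue v (update a i r) univ ≤ coveredValue v a univ) :
    isNE A K v a :=
  ⟨ha, fun i hi r hr => by linarith [utility_update_sub_utility v a i r, hdev i hi r hr], hK⟩

theorem exists_coveredValue_max_of_eqOn {s : N → R} (hs : isProfile A s) (K : Finset N) :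
    ∃ a, isProfile A a ∧ Set.EqOn a s K ∧ ∀ c, isProfile A c → Set.EqOn c s K →
      coveredValue v c univ ≤ coveredValue v a univ := by
  classical
  have hmem : ∀ c, c ∈ (Fintype.piFinset A).filter (Set.EqOn · s K) ↔
      isProfile A c ∧ Set.EqOn c s K := fun c => by
    rw [mem_filter, Fintype.mem_piFinset, isProfile]
  obtain ⟨a, ha, hmax⟩ := ((Fintype.piFinset A).filter (Set.EqOn · s K)).exists_max_image
    (coveredValue v · univ) ⟨s, (hmem s).2 ⟨hs, Set.eqOn_refl _ _⟩⟩
  exact ⟨a, ((hmem a).1 ha).1, ((hmem a).1 ha).2, fun c hc hcK => hmax c ((hmem c).2 ⟨hc, hcK⟩)⟩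

theorem exists_coveredValue_max (hA : ∀ i, (A i).Nonempty) (v : R → ℝ) :
    ∃ b, isProfile A b ∧ ∀ c, isProfile A c → coveredValue v c univ ≤ coveredValue v b univ := by
  choose s hs using hA
  obtain ⟨b, hb, -, hmax⟩ := exists_coveredValue_max_of_eqOn (v := v) hs ∅
  exact ⟨b, hb, fun c hc => hmax c hc (by simp)⟩

theorem exists_isNE (hA : ∀ i, (A i).Nonempty) (K : Finset N) (v : R → ℝ) :
    ∃ a, isNE A K v a := by
  choose s hsA hsmax using fun i => (A i).exists_max_image v (hA i)
  obtain ⟨a, ha, haK, hmax⟩ := exists_coveredValue_max_of_eqOn (v := v) hsA K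
  refine ⟨a, isNE_of_coveredValue_update_le ha (fun j hj r hr => ?_)
    fun i hi r hr => hmax _ (ha.update hr) fun j hj => ?_⟩
  · rw [haK hj]
    exact hsmax j r hr
  · rw [update_of_ne (ne_of_mem_of_not_mem hj hi)]
    exact haK hj

theorem le_coveredValue_of_isNE (hv : ∀ r, 0 ≤ v r) (ha : isNE A K v a) {i : N} {r : R}
    (hr : r ∈ A i) : v r ≤ coveredValue v a univ := by
  by_cases hi : i ∈ K
  · exact (ha.2.2 i hi r hr).trans (le_coveredValue_of_mem hv (mem_image_of_mem a (mem_univ i)))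
  by_cases hcov : r ∈ univ.image a
  · exact le_coveredValue_of_mem hv hcov
  calc v r = utility v (update a i r) i := (utility_update_of_notMem v i hcov).symm
    _ ≤ utility v a i := ha.2.1 i hi r hr
    _ ≤ coveredValue v a univ := utility_le_coveredValue hv a i

theorem coveredValue_le_of_isNE (hv : ∀ r, 0 ≤ v r) (ha : isNE A K v a) (hb : isProfile A b) :
    coveredValue v b univ ≤
      2 * coveredValue v a univ - coveredValue v a K + ∑ j ∈ K, v (b j) := by
  have hdev : ∀ i, (if b i ∉ univ.image a then v (b i) else 0) ≤
      if i ∈ K then v (b i) else utility v a i := by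
    intro i
    by_cases hcov : b i ∈ univ.image a
    · rw [if_neg (not_not.2 hcov)]
      split_ifs
      exacts [hv _, utility_nonneg hv a i]
    · rw [if_pos hcov]
      split_ifs with hi
      · exact le_rfl
      · rw [← utility_update_of_notMem v i hcov]
        exact ha.2.1 i hi (b i) (hb i)
  have hsplit : ∑ i, (if i ∈ K then v (b i) else utility v a i) =
      ∑ j ∈ K, v (b j) + ∑ i ∈ Kᶜ, utility v a i := by
    rw [← sum_add_sum_compl K]
    exact congrArg₂ (· + ·) (sum_congr rfl fun i hi => if_pos hi)
      (sum_congr rfl fun i hi => if_neg (mem_compl.1 hi))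
  have hnormal := sum_utility_le hv a Kᶜ
  rw [compl_compl] at hnormal
  calc coveredValue v b univ
      ≤ coveredValue v a univ + ∑ i ∈ univ with b i ∉ univ.image a, v (b i) :=
        sum_image_le_add_sum_filter_notMem _ _ _ hv
    _ ≤ coveredValue v a univ + ∑ i, (if i ∈ K then v (b i) else utility v a i) := by
        rw [sum_filter]
        gcongr with i
        exact hdev i
    _ ≤ 2 * coveredValue v a univ - coveredValue v a K + ∑ j ∈ K, v (b j) := by
        rw [hsplit]
        linarith

theorem poSoneHolds_raise {M : ℝ} (hb : isProfile A b)
    (hbopt : ∀ c, isProfile A c → coveredValue v c univ ≤ coveredValue v b univ)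
    (hM : ∀ j ∈ K, ∀ r ∈ A j, v r ≤ M) :
    PoSoneHolds A K fun r => v r + if r ∈ K.image b then M - v r else 0 := by
  set p : R → ℝ := fun r => if r ∈ K.image b then M - v r else 0
  have hvM : ∀ r ∈ K.image b, v r ≤ M := by
    simp only [mem_image]
    rintro _ ⟨j, hj, rfl⟩
    exact hM j hj (b j) (hb j)
  have hp : ∀ r, 0 ≤ p r := fun r => by
    simp only [p]
    split_ifs with hr
    exacts [sub_nonneg.2 (hvM r hr), le_rfl]
  have hpb : ∀ r ∉ univ.image b, p r = 0 := fun r hr =>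
    if_neg fun h => hr (image_subset_image (subset_univ K) h)
  have hopt : ∀ c, isProfile A c → coveredValue (fun r => v r + p r) c univ ≤
      coveredValue (fun r => v r + p r) b univ := fun c hc => by
    rw [coveredValue_add, coveredValue_add]
    linarith [hbopt c hc, coveredValue_le_of_support_subset hp hpb c]
  refine ⟨b, isNE_of_coveredValue_update_le hb (fun j hj r hr => ?_)
    (fun i _ r hr => hopt _ (hb.update hr)), hopt⟩
  simp only [if_pos (mem_image_of_mem b hj)]
  split_ifs <;> linarith [hM j hj r hr]

theorem gameDist_le_sum [Fintype R] {p : R → ℝ} (hp : ∀ r, 0 ≤ p r)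
    (h : PoSoneHolds A K fun r => v r + p r) : gameDist A K v ≤ ∑ r, p r :=
  csInf_le ⟨0, by rintro _ ⟨q, hq, -, rfl⟩; exact sum_nonneg fun r _ => hq r⟩ ⟨p, hp, h, rfl⟩

theorem gameDist_le_sum_sub [Fintype R] {M : ℝ} (hb : isProfile A b)
    (hbopt : ∀ c, isProfile A c → coveredValue v c univ ≤ coveredValue v b univ)
    (hM : ∀ j ∈ K, ∀ r ∈ A j, v r ≤ M) :
    gameDist A K v ≤ ∑ j ∈ K, (M - v (b j)) := by
  have hvM : ∀ j ∈ K, 0 ≤ M - v (b j) := fun j hj => sub_nonneg.2 (hM j hj (b j) (hb j))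
  calc gameDist A K v ≤ ∑ r, if r ∈ K.image b then M - v r else 0 := by
        refine gameDist_le_sum (fun r => ?_) (poSoneHolds_raise hb hbopt hM)
        split_ifs with hr
        · obtain ⟨j, hj, rfl⟩ := mem_image.1 hr
          exact hvM j hj
        · exact le_rfl
    _ = ∑ r ∈ K.image b, (M - v r) := Fintype.sum_ite_mem _ _
    _ ≤ ∑ j ∈ K, (M - v (b j)) := sum_image_le_of_nonneg fun r hr => by
        obtain ⟨j, hj, rfl⟩ := mem_image.1 hr
        exact hvM j hj

theorem coveredValue_le_two_mul_or_of_isNE [Fintype R] (hv0 : ∀ r, 0 ≤ v r) (hv1 : ∀ r, v r ≤ 1)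
    (hw : 1 ≤ coveredValue v a univ) (ha : isNE A K v a) (hb : isProfile A b)
    (hbopt : ∀ c, isProfile A c → coveredValue v c univ ≤ coveredValue v b univ) :
    coveredValue v b univ ≤ 2 * coveredValue v a univ ∨
      coveredValue v b univ ≤ ((K.card : ℝ) + 1 - gameDist A K v) * coveredValue v a univ := by
  refine or_iff_not_imp_left.2 fun hlt => ?_
  rw [not_le] at hlt
  have hsmooth := coveredValue_le_of_isNE hv0 ha hb
  have hK : K.Nonempty := by
    rw [nonempty_iff_ne_empty]
    rintro rfl
    have h0 : coveredValue v a ∅ = 0 := by rw [coveredValue, image_empty, sum_empty]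
    rw [h0, sum_empty] at hsmooth
    linarith
  obtain ⟨j₀, hj₀, hmaxK⟩ := K.exists_max_image (fun j => v (a j)) hK
  have hD := gameDist_le_sum_sub hb hbopt fun j hj r hr => (ha.2.2 j hj r hr).trans (hmaxK j hj)
  rw [sum_sub_distrib, sum_const, nsmul_eq_mul] at hD
  have hMK := le_coveredValue_of_mem hv0 (mem_image_of_mem a hj₀)
  exact le_mul_of_two_mul_lt hw (hv1 _) (by exact_mod_cast hK.card_pos) hlt (by linarith)

end CoverageGame

/-- Fragility of the price of anarchy (main theorem): for any coverage game with
compromised agent set `K` and distance `D(G)`,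
`PoA(G) ≥ min{1/2, 1/(|K| + 1 − D(G))}`. -/
theorem poa_fragility (A : N → Finset R) (K : Finset N) (v : R → ℝ)
    (hA : ∀ i, (A i).Nonempty)
    (hv0 : ∀ r, 0 ≤ v r) (hv1 : ∀ r, v r ≤ 1)
    (hmax : ∃ i, ∃ r ∈ A i, v r = 1) :
    min (1 / 2) (1 / ((K.card : ℝ) + 1 - gameDist A K v)) ≤ PoA A K v := by
  obtain ⟨b, hb, hbopt⟩ := exists_coveredValue_max hA v
  obtain ⟨a₀, ha₀⟩ := exists_isNE hA K v
  obtain ⟨i, r, hr, hr1⟩ := hmax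
  have hw : ∀ a, isNE A K v a → 1 ≤ coveredValue v a univ := fun a ha =>
    hr1 ▸ le_coveredValue_of_isNE hv0 ha hr
  have hopt : 0 < coveredValue v b univ := one_pos.trans_le ((hw a₀ ha₀).trans (hbopt a₀ ha₀.1))
  rw [PoA, optWelfare_eq hb hbopt, le_div_iff₀ hopt, worstNEWelfare]
  refine le_csInf ⟨_, a₀, ha₀, rfl⟩ ?_
  rintro _ ⟨a, ha, rfl⟩
  exact min_one_div_mul_le hopt.le (zero_le_one.trans (hw a ha))
    (coveredValue_le_two_mul_or_of_isNE hv0 hv1 (hw a ha) ha hb hbopt)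
end

section
/- (Tightness) For every integer k ≥ 1 and every D ∈ [0, k−1], there is a single-selection coverage game G with k compromised agents and distance D(G) = D whose worst Nash equilibrium achieves exactly W(a^{ne})/W(a^{opt}) = 1/(k + 1 − D): take n = k+1 agents, one resource R₀ of value 1 admissible to all agents, and k resources of value 1 − D/k each admissible to exactly one compromised agent; all compromised agents selecting R₀ is a Nash equilibrium of welfare 1, while the optimum has welfare 1 + k(1 − D/k) = k + 1 − D. -/
open Finset

variable {N R : Type} [Fintype N] [DecidableEq N] [Fintype R] [DecidableEq R]

/-
Agent `0` is the normal agent and can only select `R₀ = 0`; compromised agent `j ≠ 0` may select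
`R₀` or its private resource `j`, of value `c = 1 - D / k ≤ 1`. Everyone on `R₀` is then an
equilibrium of welfare `1`, and every profile covers `R₀`, so the worst equilibrium has welfare `1`,
while the identity profile covers everything and has welfare `1 + k c = k + 1 - D`.

For the distance: after a nonnegative perturbation `p` all values are positive, so a
welfare-optimal profile must cover every resource, and the only such profile is the identity.
For it to be an equilibrium, each compromised agent `j` must weakly prefer resource `j` to `R₀`,
i.e. `p j ≥ 1 - c + p 0`; hence `∑ p ≥ k (1 - c) = D`, with equality for `p = 1 - v`.
-/

open Function

omit [DecidableEq N] in
theorem coveredValue_le_sum {v : R → ℝ} (hv : ∀ r, 0 ≤ v r) (a : N → R) :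
    coveredValue v a univ ≤ ∑ r, v r :=
  sum_le_sum_of_subset_of_nonneg (subset_univ _) fun r _ _ => hv r

omit [DecidableEq N] in
theorem coveredValue_of_surjective (v : R → ℝ) {a : N → R} (ha : Surjective a) :
    coveredValue v a univ = ∑ r, v r := by
  rw [coveredValue, image_univ_of_surjective ha]

omit [DecidableEq N] in
theorem surjective_of_sum_le_coveredValue {v : R → ℝ} (hv : ∀ r, 0 < v r) {a : N → R}
    (h : ∑ r, v r ≤ coveredValue v a univ) : Surjective a := by
  intro r
  by_contra hr
  have hr' : r ∉ univ.image a := by simpa using hr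
  exact h.not_gt <|
    sum_lt_sum_of_subset (subset_univ _) (mem_univ r) hr' (hv r) fun j _ _ => (hv j).le

omit [Fintype R] in
theorem isNE_of_forced_normal_agents {A : N → Finset R} {K : Finset N} {v : R → ℝ} {a : N → R}
    (ha : isProfile A a) (hnormal : ∀ i ∉ K, ∀ b ∈ A i, b = a i)
    (hcomp : ∀ j ∈ K, ∀ r ∈ A j, v r ≤ v (a j)) : isNE A K v a :=
  ⟨ha, fun i hi b hb => by rw [hnormal i hi b hb, update_eq_self], hcomp⟩

namespace TightnessGame

variable (k : ℕ)

def actions (i : Fin (k + 1)) : Finset (Fin (k + 1)) := if i = 0 then {0} else {0, i}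

def compromised : Finset (Fin (k + 1)) := univ.erase 0

def value (c : ℝ) (r : Fin (k + 1)) : ℝ := if r = 0 then 1 else c

variable {k}

theorem card_compromised : (compromised k).card = k := by simp [compromised]

theorem notMem_compromised {i : Fin (k + 1)} : i ∉ compromised k ↔ i = 0 := by
  simp [compromised]

theorem mem_actions_zero {b : Fin (k + 1)} : b ∈ actions k 0 ↔ b = 0 := by simp [actions]

theorem zero_mem_actions (i : Fin (k + 1)) : 0 ∈ actions k i := by
  unfold actions; split_ifs <;> simp

theorem isProfile_id : isProfile (actions k) id := fun i => by
  unfold actions; split_ifs with h <;> simp [h]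

theorem apply_zero_of_isProfile {a : Fin (k + 1) → Fin (k + 1)} (ha : isProfile (actions k) a) :
    a 0 = 0 :=
  mem_actions_zero.1 (ha 0)

theorem eq_id_of_isProfile_of_injective {a : Fin (k + 1) → Fin (k + 1)}
    (ha : isProfile (actions k) a) (hinj : Injective a) : a = id := by
  funext j
  by_cases hj : j = 0
  · subst hj
    exact apply_zero_of_isProfile ha
  · have haj := ha j
    simp only [actions, hj, if_false, mem_insert, mem_singleton] at haj
    rcases haj with h | h
    · exact absurd (hinj (h.trans (apply_zero_of_isProfile ha).symm)) hj
    · exact h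

theorem sum_value (c : ℝ) : ∑ r, value k c r = 1 + k * c := by
  simp [Fin.sum_univ_succ, value, Fin.succ_ne_zero]

theorem value_nonneg {c : ℝ} (hc : 0 ≤ c) (r : Fin (k + 1)) : 0 ≤ value k c r := by
  unfold value; split_ifs <;> linarith

theorem value_pos {c : ℝ} (hc : 0 < c) (r : Fin (k + 1)) : 0 < value k c r := by
  unfold value; split_ifs <;> linarith

theorem value_le_one {c : ℝ} (hc : c ≤ 1) (r : Fin (k + 1)) : value k c r ≤ 1 := by
  unfold value; split_ifs <;> linarith

theorem one_le_coveredValue {c : ℝ} (hc : 0 ≤ c) {a : Fin (k + 1) → Fin (k + 1)}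
    (ha : isProfile (actions k) a) : 1 ≤ coveredValue (value k c) a univ := by
  unfold coveredValue
  have h0 : (0 : Fin (k + 1)) ∈ univ.image a :=
    mem_image.2 ⟨0, mem_univ _, apply_zero_of_isProfile ha⟩
  simpa [value] using single_le_sum (fun r _ => value_nonneg hc r) h0

theorem isNE_const_zero {c : ℝ} (hc : c ≤ 1) :
    isNE (actions k) (compromised k) (value k c) fun _ => 0 :=
  isNE_of_forced_normal_agents zero_mem_actions
    (fun i hi b hb => by rw [notMem_compromised] at hi; subst hi; exact mem_actions_zero.1 hb)
    (fun _ _ r _ => value_le_one hc r)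

theorem isNE_id_const_one : isNE (actions k) (compromised k) (fun _ => (1 : ℝ)) id :=
  isNE_of_forced_normal_agents isProfile_id
    (fun i hi b hb => by rw [notMem_compromised] at hi; subst hi; exact mem_actions_zero.1 hb)
    (fun _ _ _ _ => le_rfl)

theorem worstNEWelfare_eq {c : ℝ} (hc0 : 0 ≤ c) (hc1 : c ≤ 1) :
    worstNEWelfare (actions k) (compromised k) (value k c) = 1 :=
  IsLeast.csInf_eq
    ⟨⟨_, isNE_const_zero hc1, by simp [coveredValue, value, image_const univ_nonempty]⟩,
      by rintro _ ⟨a, ha, rfl⟩; exact one_le_coveredValue hc0 ha.1⟩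

theorem optWelfare_eq {c : ℝ} (hc : 0 ≤ c) : optWelfare (actions k) (value k c) = 1 + k * c :=
  IsGreatest.csSup_eq
    ⟨⟨id, isProfile_id, by rw [coveredValue_of_surjective _ surjective_id, sum_value]⟩,
      by rintro _ ⟨a, -, rfl⟩; rw [← sum_value]; exact coveredValue_le_sum (value_nonneg hc) a⟩

theorem le_sum_of_PoSoneHolds {c : ℝ} (hc : 0 < c) {p : Fin (k + 1) → ℝ} (hp : ∀ r, 0 ≤ p r)
    (h : PoSoneHolds (actions k) (compromised k) fun r => value k c r + p r) :
    k * (1 - c) ≤ ∑ r, p r := by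
  obtain ⟨a, ⟨ha, -, hmax⟩, hopt⟩ := h
  have hsurj := surjective_of_sum_le_coveredValue
      (fun r => add_pos_of_pos_of_nonneg (value_pos hc r) (hp r)) <| by
    simpa only [coveredValue_of_surjective _ surjective_id] using hopt id isProfile_id
  obtain rfl := eq_id_of_isProfile_of_injective ha (Finite.injective_iff_surjective.2 hsurj)
  have hpj (j : Fin k) : 1 - c ≤ p j.succ := by
    have := hmax j.succ (by simp [compromised, Fin.succ_ne_zero]) 0 (zero_mem_actions _)
    simp only [value, id, Fin.succ_ne_zero, if_true, if_false] at this
    linarith [hp 0]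
  calc (k : ℝ) * (1 - c) = ∑ _j : Fin k, (1 - c) := by simp [mul_sub]
    _ ≤ ∑ j : Fin k, p j.succ := sum_le_sum fun j _ => hpj j
    _ ≤ ∑ r, p r := by rw [Fin.sum_univ_succ]; linarith [hp 0]

theorem gameDist_eq {c : ℝ} (hc0 : 0 < c) (hc1 : c ≤ 1) :
    gameDist (actions k) (compromised k) (value k c) = k * (1 - c) :=
  IsLeast.csInf_eq
    ⟨⟨fun r => 1 - value k c r, fun r => sub_nonneg.2 (value_le_one hc1 r),
        ⟨id, by simpa using isNE_id_const_one, fun b _ => by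
          simpa [coveredValue_of_surjective _ surjective_id] using
            coveredValue_le_sum (fun _ => zero_le_one) b⟩,
        by rw [sum_sub_distrib, sum_value]; simp; ring⟩,
      by rintro _ ⟨p, hp, h, rfl⟩; exact le_sum_of_PoSoneHolds hc0 hp h⟩

end TightnessGame

open TightnessGame in
theorem tightness_general (k : ℕ) (D : ℝ) (hD0 : 0 ≤ D) (hDk : D ≤ (k : ℝ) - 1) :
    ∃ (A : Fin (k + 1) → Finset (Fin (k + 1))) (K : Finset (Fin (k + 1)))
      (v : Fin (k + 1) → ℝ),
      K.card = k ∧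
      gameDist A K v = D ∧
      worstNEWelfare A K v = 1 ∧
      optWelfare A v = (k : ℝ) + 1 - D ∧
      worstNEWelfare A K v / optWelfare A v = 1 / ((k : ℝ) + 1 - D) := by
  have hk : (0 : ℝ) < k := by linarith
  have hc0 : 0 < 1 - D / k := by rw [sub_pos, div_lt_one hk]; linarith
  have hc1 : 1 - D / k ≤ 1 := by linarith [div_nonneg hD0 hk.le]
  have hdist : (k : ℝ) * (1 - (1 - D / k)) = D := by field_simp; ring
  have hopt : 1 + k * (1 - D / k) = (k : ℝ) + 1 - D := by field_simp; ring
  refine ⟨actions k, compromised k, value k (1 - D / k), card_compromised, ?_,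
    worstNEWelfare_eq hc0.le hc1, ?_, ?_⟩
  · rw [gameDist_eq hc0 hc1, hdist]
  · rw [optWelfare_eq hc0.le, hopt]
  · rw [worstNEWelfare_eq hc0.le hc1, optWelfare_eq hc0.le, hopt]

/-- Tightness: for every `k ≥ 1` and `D ∈ [0, k−1]` there is a coverage game
with `k` compromised agents and distance `D` whose worst Nash equilibrium has
welfare 1, optimal welfare `k + 1 − D`, and hence ratio `1/(k + 1 − D)`. -/
theorem tightness (k : ℕ) (hk : 1 ≤ k) (D : ℝ) (hD0 : 0 ≤ D) (hDk : D ≤ (k : ℝ) - 1) :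
    ∃ (A : Fin (k + 1) → Finset (Fin (k + 1))) (K : Finset (Fin (k + 1)))
      (v : Fin (k + 1) → ℝ),
      K.card = k ∧
      gameDist A K v = D ∧
      worstNEWelfare A K v = 1 ∧
      optWelfare A v = (k : ℝ) + 1 - D ∧
      worstNEWelfare A K v / optWelfare A v = 1 / ((k : ℝ) + 1 - D) :=
  tightness_general k D hD0 hDk
end
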